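/- arXiv:1711.05032 — 2 statements merged into one kernel-verified Lean document; each statement's English description precedes it below -/
import Mathlib

section
/- Define U(e, ℓ) = 2^B · ((e + ℓ)/ℓ)^{−ℓ} + a·ℓ for e, ℓ > 0 and constants B ∈ ℝ, a > 0 (this equals 2^{B − ℓ·log₂(1+e/ℓ)} + a·ℓ using natural-exponent convention). Then the determinant of the Hessian of U with respect to (e, ℓ) equals P² · (ℓ/(ℓ+e)²) · log₂²(ℓ/(ℓ+e)), where P = 2^B · ((e+ℓ)/ℓ)^{−ℓ}. In particular the Hessian determinant is nonnegative. -/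
/-!
Writing `f(x, y) = ((x + y) / y) ^ (-y) = exp (-y (log (x + y) - log y))`, every partial
derivative of `f` up to order two is `f` times a rational function of `x, y` and
`L = log ((x + y) / y)`: `f_x = -t f`, `f_y = (q - L) f` with `q = x / (x + y)`,
`t = y / (x + y)`. The linear term `a y` of the cost drops out of all second derivatives,
and in the determinant the terms in `(q - L)` combine into the perfect square
`(y / (x + y) ^ 2) (q - (q - L)) ^ 2`.
-/

open Real Filter Topology

/-- `2 ^ (-b̂)` for `b̂ = y · log₂ (1 + x / y)`. -/
noncomputable def distortion (x y : ℝ) : ℝ := ((x + y) / y) ^ (-y)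

noncomputable def packetCost (B a x y : ℝ) : ℝ := 2 ^ B * distortion x y + a * y

section Distortion

variable {x y : ℝ}

lemma distortion_eq_exp (hy : 0 < y) (hxy : 0 < x + y) :
    distortion x y = exp (-y * (log (x + y) - log y)) := by
  rw [distortion, rpow_def_of_pos (div_pos hxy hy), log_div hxy.ne' hy.ne', mul_comm]

lemma hasDerivAt_distortion_left (hy : 0 < y) (hxy : 0 < x + y) :
    HasDerivAt (fun x => distortion x y) (-(y / (x + y)) * distortion x y) x := by
  have hlog : HasDerivAt (fun x => log (x + y)) (1 / (x + y)) x := by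
    simpa using ((hasDerivAt_id x).add_const y).log hxy.ne'
  have hexp := ((hlog.sub_const (log y)).const_mul (-y)).exp
  have hnear : (fun x => distortion x y) =ᶠ[𝓝 x] fun x => exp (-y * (log (x + y) - log y)) := by
    filter_upwards [eventually_gt_nhds (show -y < x by linarith)] with x' hx'
    exact distortion_eq_exp hy (by linarith)
  refine (hexp.congr_of_eventuallyEq hnear).congr_deriv ?_
  rw [distortion_eq_exp hy hxy]
  field_simp

lemma hasDerivAt_distortion_right (hy : 0 < y) (hxy : 0 < x + y) :
    HasDerivAt (fun y => distortion x y) ((x / (x + y) - log ((x + y) / y)) * distortion x y) y := by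
  have hlog : HasDerivAt (fun y => log (x + y) - log y) (1 / (x + y) - 1 / y) y := by
    simpa using (((hasDerivAt_id y).const_add x).log hxy.ne').fun_sub (hasDerivAt_log hy.ne')
  have hexp := ((hasDerivAt_neg' y).fun_mul hlog).exp
  have hnear : (fun y => distortion x y) =ᶠ[𝓝 y] fun y => exp (-y * (log (x + y) - log y)) := by
    filter_upwards [eventually_gt_nhds hy, eventually_gt_nhds (show -x < y by linarith)]
      with y' hy' hxy'
    exact distortion_eq_exp hy' (by linarith)
  refine (hexp.congr_of_eventuallyEq hnear).congr_deriv ?_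
  rw [distortion_eq_exp hy hxy, log_div hxy.ne' hy.ne']
  field_simp
  ring

lemma hasDerivAt_distortion_left_left (hy : 0 < y) (hxy : 0 < x + y) :
    HasDerivAt (fun x => -(y / (x + y)) * distortion x y)
      (y * (y + 1) / (x + y) ^ 2 * distortion x y) x := by
  have hq : HasDerivAt (fun x => -(y / (x + y))) (y / (x + y) ^ 2) x := by
    refine (((hasDerivAt_const x y).div ((hasDerivAt_id' x).add_const y) hxy.ne').fun_neg).congr_deriv ?_
    field_simp
    ring
  refine (hq.fun_mul (hasDerivAt_distortion_left hy hxy)).congr_deriv ?_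
  field_simp
  ring

lemma hasDerivAt_distortion_left_right (hy : 0 < y) (hxy : 0 < x + y) :
    HasDerivAt (fun y => -(y / (x + y)) * distortion x y)
      (-(x / (x + y) ^ 2 + y / (x + y) * (x / (x + y) - log ((x + y) / y))) * distortion x y)
      y := by
  have hq : HasDerivAt (fun y => -(y / (x + y))) (-(x / (x + y) ^ 2)) y := by
    refine (((hasDerivAt_id' y).div ((hasDerivAt_id' y).const_add x) hxy.ne').fun_neg).congr_deriv ?_
    field_simp
    ring
  refine (hq.fun_mul (hasDerivAt_distortion_right hy hxy)).congr_deriv ?_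
  ring

lemma hasDerivAt_distortion_right_right (hy : 0 < y) (hxy : 0 < x + y) :
    HasDerivAt (fun y => (x / (x + y) - log ((x + y) / y)) * distortion x y)
      ((x ^ 2 / (y * (x + y) ^ 2) + (x / (x + y) - log ((x + y) / y)) ^ 2) * distortion x y)
      y := by
  have hq : HasDerivAt (fun y => x / (x + y) - log ((x + y) / y)) (x ^ 2 / (y * (x + y) ^ 2)) y := by
    have hlog := (((hasDerivAt_id' y).const_add x).fun_div (hasDerivAt_id' y) hy.ne').log
      (div_pos hxy hy).ne'
    refine (((hasDerivAt_const y x).div ((hasDerivAt_id' y).const_add x) hxy.ne').fun_sub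
      hlog).congr_deriv ?_
    field_simp
    ring
  refine (hq.fun_mul (hasDerivAt_distortion_right hy hxy)).congr_deriv ?_
  ring

end Distortion

section PacketCost

variable {B a x y : ℝ}

lemma hasDerivAt_packetCost_left (hy : 0 < y) (hxy : 0 < x + y) :
    HasDerivAt (fun x => packetCost B a x y) (2 ^ B * (-(y / (x + y)) * distortion x y)) x :=
  ((hasDerivAt_distortion_left hy hxy).const_mul _).add_const _

lemma hasDerivAt_packetCost_right (hy : 0 < y) (hxy : 0 < x + y) :
    HasDerivAt (fun y => packetCost B a x y)
      (2 ^ B * ((x / (x + y) - log ((x + y) / y)) * distortion x y) + a) y :=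
  (((hasDerivAt_distortion_right hy hxy).const_mul _).add
    ((hasDerivAt_id' y).const_mul a)).congr_deriv (by ring)

lemma deriv_deriv_packetCost_left_left (hy : 0 < y) (hxy : 0 < x + y) :
    deriv (fun x => deriv (fun x' => packetCost B a x' y) x) x
      = 2 ^ B * (y * (y + 1) / (x + y) ^ 2 * distortion x y) := by
  have hnear : (fun x => deriv (fun x' => packetCost B a x' y) x)
      =ᶠ[𝓝 x] fun x => 2 ^ B * (-(y / (x + y)) * distortion x y) := by
    filter_upwards [eventually_gt_nhds (show -y < x by linarith)] with x' hx'
    exact (hasDerivAt_packetCost_left hy (by linarith)).deriv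
  exact hnear.deriv_eq.trans ((hasDerivAt_distortion_left_left hy hxy).const_mul _).deriv

lemma deriv_deriv_packetCost_left_right (hy : 0 < y) (hxy : 0 < x + y) :
    deriv (fun y => deriv (fun x' => packetCost B a x' y) x) y
      = 2 ^ B * (-(x / (x + y) ^ 2 + y / (x + y) * (x / (x + y) - log ((x + y) / y)))
        * distortion x y) := by
  have hnear : (fun y => deriv (fun x' => packetCost B a x' y) x)
      =ᶠ[𝓝 y] fun y => 2 ^ B * (-(y / (x + y)) * distortion x y) := by
    filter_upwards [eventually_gt_nhds hy, eventually_gt_nhds (show -x < y by linarith)]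
      with y' hy' hxy'
    exact (hasDerivAt_packetCost_left hy' (by linarith)).deriv
  exact hnear.deriv_eq.trans ((hasDerivAt_distortion_left_right hy hxy).const_mul _).deriv

lemma deriv_deriv_packetCost_right_right (hy : 0 < y) (hxy : 0 < x + y) :
    deriv (fun y => deriv (fun y' => packetCost B a x y') y) y
      = 2 ^ B * ((x ^ 2 / (y * (x + y) ^ 2) + (x / (x + y) - log ((x + y) / y)) ^ 2)
        * distortion x y) := by
  have hnear : (fun y => deriv (fun y' => packetCost B a x y') y)
      =ᶠ[𝓝 y] fun y => 2 ^ B * ((x / (x + y) - log ((x + y) / y)) * distortion x y) + a := by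
    filter_upwards [eventually_gt_nhds hy, eventually_gt_nhds (show -x < y by linarith)]
      with y' hy' hxy'
    exact (hasDerivAt_packetCost_right hy' (by linarith)).deriv
  exact hnear.deriv_eq.trans
    (((hasDerivAt_distortion_right_right hy hxy).const_mul _).add_const a).deriv

end PacketCost

lemma hessian_det_eq {x y : ℝ} (c f L : ℝ) (hy : y ≠ 0) (hxy : x + y ≠ 0) :
    c * (y * (y + 1) / (x + y) ^ 2 * f)
        * (c * ((x ^ 2 / (y * (x + y) ^ 2) + (x / (x + y) - L) ^ 2) * f))
      - (c * (-(x / (x + y) ^ 2 + y / (x + y) * (x / (x + y) - L)) * f)) ^ 2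
      = (c * f) ^ 2 * (y / (x + y) ^ 2) * L ^ 2 := by
  field_simp
  ring

theorem hessian_det_formula_general (B a : ℝ) (e ℓ : ℝ) (he : 0 < e) (hl : 0 < ℓ) :
    let U : ℝ → ℝ → ℝ := fun x y => (2 : ℝ) ^ B * ((x + y) / y) ^ (-y) + a * y
    let P : ℝ := (2 : ℝ) ^ B * ((e + ℓ) / ℓ) ^ (-ℓ)
    let Uee : ℝ := deriv (fun x => deriv (fun x' => U x' ℓ) x) e
    let Ull : ℝ := deriv (fun y => deriv (fun y' => U e y') y) ℓ
    let Uel : ℝ := deriv (fun y => deriv (fun x => U x y) e) ℓ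
    Uee * Ull - Uel ^ 2
      = P ^ 2 * (ℓ / (ℓ + e) ^ 2) * (Real.log (ℓ / (ℓ + e))) ^ 2 ∧
    0 ≤ Uee * Ull - Uel ^ 2 := by
  intro U P Uee Ull Uel
  have hs : 0 < e + ℓ := by linarith
  have hdet : Uee * Ull - Uel ^ 2 = P ^ 2 * (ℓ / (ℓ + e) ^ 2) * log (ℓ / (ℓ + e)) ^ 2 := by
    have hUee : Uee = _ := deriv_deriv_packetCost_left_left (B := B) (a := a) hl hs
    have hUll : Ull = _ := deriv_deriv_packetCost_right_right (B := B) (a := a) hl hs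
    have hUel : Uel = _ := deriv_deriv_packetCost_left_right (B := B) (a := a) hl hs
    have hlog : log (ℓ / (ℓ + e)) ^ 2 = log ((e + ℓ) / ℓ) ^ 2 := by
      rw [add_comm ℓ e, ← inv_div, log_inv, neg_sq]
    rw [hUee, hUll, hUel, hessian_det_eq _ _ _ hl.ne' hs.ne', hlog, add_comm ℓ e]
    rfl
  refine ⟨hdet, ?_⟩
  rw [hdet]
  positivity

/-- For U(e, ℓ) = 2^B · ((e + ℓ)/ℓ)^(−ℓ) + a·ℓ with e, ℓ > 0, the determinant of the
Hessian of U with respect to (e, ℓ) equals P² · (ℓ/(ℓ+e)²) · log²(ℓ/(ℓ+e)),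
where P = 2^B · ((e+ℓ)/ℓ)^(−ℓ). In particular the Hessian determinant is nonnegative. -/
theorem hessian_det_formula (B a : ℝ) (ha : 0 < a) (e ℓ : ℝ) (he : 0 < e) (hl : 0 < ℓ) :
    let U : ℝ → ℝ → ℝ := fun x y => (2 : ℝ) ^ B * ((x + y) / y) ^ (-y) + a * y
    let P : ℝ := (2 : ℝ) ^ B * ((e + ℓ) / ℓ) ^ (-ℓ)
    let Uee : ℝ := deriv (fun x => deriv (fun x' => U x' ℓ) x) e
    let Ull : ℝ := deriv (fun y => deriv (fun y' => U e y') y) ℓ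
    let Uel : ℝ := deriv (fun y => deriv (fun x => U x y) e) ℓ
    Uee * Ull - Uel ^ 2
      = P ^ 2 * (ℓ / (ℓ + e) ^ 2) * (Real.log (ℓ / (ℓ + e))) ^ 2 ∧
    0 ≤ Uee * Ull - Uel ^ 2 :=
  hessian_det_formula_general B a e ℓ he hl
end

section
/- Let b : ℕ → ℝ be a function where b(k) is the number of bits transmitted using k resource blocks in a slot, b(k) = ℓ·log₂(1 + e·k/ℓ) for constants e, ℓ > 0. Then the distortion k ↦ 2^{B − b(k)} is a convex, decreasing function of k ∈ ℕ, i.e., 2^{B−b(k+1)} − 2^{B−b(k+2)} ≤ 2^{B−b(k)} − 2^{B−b(k+1)} for all k. -/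
/-!
The distortion is `2^B · u_k^(-ℓ)` with `u_k = 1 + e k / ℓ` increasing and arithmetic, hence
`u_k u_{k+2} ≤ u_{k+1}²`. Raising to the power `-ℓ` reverses this, so `u_k^(-ℓ)` is a positive
log-convex sequence, and AM–GM (`2√(ac) ≤ a + c`) turns log-convexity into convexity.
-/

open Real

lemma rpow_neg_sq_le_mul {x y z p : ℝ} (hx : 0 < x) (hy : 0 ≤ y) (hz : 0 < z) (hp : 0 ≤ p)
    (h : x * z ≤ y ^ 2) : (y ^ (-p)) ^ 2 ≤ x ^ (-p) * z ^ (-p) := by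
  rw [rpow_pow_comm hy, ← mul_rpow hx.le hz.le]
  exact rpow_le_rpow_of_nonpos (mul_pos hx hz) h (neg_nonpos.mpr hp)

lemma two_mul_rpow_neg_le_add {x y z p : ℝ} (hx : 0 < x) (hy : 0 ≤ y) (hz : 0 < z) (hp : 0 ≤ p)
    (h : x * z ≤ y ^ 2) : 2 * y ^ (-p) ≤ x ^ (-p) + z ^ (-p) :=
  two_mul_le_add_of_sq_le_mul (by positivity) (by positivity) (rpow_neg_sq_le_mul hx hy hz hp h)

lemma rpow_sub_mul_logb {b x : ℝ} (hb : 0 < b) (hb₁ : b ≠ 1) (hx : 0 < x) (B ℓ : ℝ) :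
    b ^ (B - ℓ * logb b x) = b ^ B * x ^ (-ℓ) := by
  rw [rpow_sub hb, mul_comm ℓ, rpow_mul hb.le, rpow_logb hb hb₁ hx, rpow_neg hx.le, div_eq_mul_inv]

/-- With b(k) = ℓ·log₂(1 + e·k/ℓ) the bits transmitted with k resource blocks,
the distortion k ↦ 2^(B − b(k)) is decreasing and convex over the integers
(decreasing successive differences). -/
theorem discrete_distortion_convex_decreasing (B e ℓ : ℝ) (he : 0 < e) (hl : 0 < ℓ) :
    let b : ℕ → ℝ := fun k => ℓ * Real.logb 2 (1 + e * k / ℓ)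
    (∀ k : ℕ, (2 : ℝ) ^ (B - b (k + 1)) ≤ (2 : ℝ) ^ (B - b k)) ∧
    (∀ k : ℕ,
      (2 : ℝ) ^ (B - b (k + 1)) - (2 : ℝ) ^ (B - b (k + 2)) ≤
      (2 : ℝ) ^ (B - b k) - (2 : ℝ) ^ (B - b (k + 1))) := by
  intro b
  let u : ℕ → ℝ := fun k => 1 + e * k / ℓ
  have hu_pos (k : ℕ) : 0 < u k := by positivity
  have hu_add (k n : ℕ) : u (k + n) = u k + n * (e / ℓ) := by
    simp only [u]; push_cast; ring
  have hd (k : ℕ) : (2 : ℝ) ^ (B - b k) = 2 ^ B * u k ^ (-ℓ) :=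
    rpow_sub_mul_logb two_pos (by norm_num) (hu_pos k) B ℓ
  simp only [hd]
  refine ⟨fun k => ?_, fun k => ?_⟩
  · have hu_le : u k ≤ u (k + 1) := by
      rw [hu_add]; push_cast; linarith [div_pos he hl]
    gcongr 2 ^ B * ?_
    exact rpow_le_rpow_of_nonpos (hu_pos k) hu_le (neg_nonpos.mpr hl.le)
  · have hu_log_concave : u k * u (k + 2) ≤ u (k + 1) ^ 2 := by
      rw [hu_add k 2, hu_add k 1]; push_cast; nlinarith [sq_nonneg (e / ℓ)]
    have hmid := two_mul_rpow_neg_le_add (hu_pos k) (hu_pos (k + 1)).le (hu_pos (k + 2)) hl.le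
      hu_log_concave
    have := mul_le_mul_of_nonneg_left hmid (rpow_nonneg zero_le_two B)
    linarith
end
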